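/- Motivation of angle-based clustering. Consider the order-K asymmetric dTBM mean tensor X(i₁,…,i_K) = S(z₁(i₁),…,z_K(i_K))·∏_{k=1}^K θ_k(i_k), where each z_k : [p_k] → [r_k] is surjective and each θ_k is entrywise strictly positive. Fix a mode k ∈ [K]. Then for every pair i, j ∈ [p_k]: Mat_k(S)_{z_k(i):}^s = Mat_k(S)_{z_k(j):}^s if and only if Mat_k(X)_{i:}^s = Mat_k(X)_{j:}^s (equivalently, the norm of the difference of the normalized rows vanishes at the core-tensor level if and only if it vanishes at the mean-tensor level). -/

import Mathlib

open scoped BigOperators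
open scoped Classical

noncomputable section

/-- Normalization `v^s := v/‖v‖`, with the convention `0^s = 0`. -/
def nzd {ι : Type*} [Fintype ι] (v : EuclideanSpace ℝ ι) : EuclideanSpace ℝ ι :=
  ‖v‖⁻¹ • v

/-- The `a`-th row of the mode-`k` matricization of an order-`K` tensor with
mode-dependent dimensions. -/
def matRowD {K : ℕ} {d : Fin K → ℕ} (T : ((k : Fin K) → Fin (d k)) → ℝ)
    (k : Fin K) (a : Fin (d k)) :
    EuclideanSpace ℝ ((i : {i : Fin K // i ≠ k}) → Fin (d i.1)) :=
  WithLp.toLp 2 (fun j => T fun i => if h : i = k then (h.symm ▸ a : Fin (d i)) else j ⟨i, h⟩)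

lemma nzd_zero_iff {ι : Type*} [Fintype ι] (v : EuclideanSpace ℝ ι) :
    nzd v = 0 ↔ v = 0 := by
  unfold nzd
  constructor
  · intro h
    rcases smul_eq_zero.mp h with h | h
    · exact norm_eq_zero.mp (inv_eq_zero.mp h)
    · exact h
  · intro h; simp [h]

lemma nzd_eq_iff {ι : Type*} [Fintype ι] (u v : EuclideanSpace ℝ ι) :
    nzd u = nzd v ↔ ∃ c : ℝ, 0 < c ∧ u = c • v := by
  constructor
  · intro h
    by_cases hu : u = 0
    · have hv : v = 0 := by
        rw [← nzd_zero_iff, ← h, nzd_zero_iff]; exact hu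
      exact ⟨1, one_pos, by simp [hu, hv]⟩
    · have hv : v ≠ 0 := by
        intro hv
        apply hu
        rw [← nzd_zero_iff, h, nzd_zero_iff]; exact hv
      have hun : (0:ℝ) < ‖u‖ := norm_pos_iff.mpr hu
      have hvn : (0:ℝ) < ‖v‖ := norm_pos_iff.mpr hv
      refine ⟨‖u‖ * ‖v‖⁻¹, by positivity, ?_⟩
      have := congrArg (fun w => ‖u‖ • w) h
      simp only [nzd, smul_smul] at this
      rw [mul_inv_cancel₀ hun.ne', one_smul] at this
      exact this
  · rintro ⟨c, hc, rfl⟩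
    by_cases hv : v = 0
    · simp [hv]
    · have hvn : (0:ℝ) < ‖v‖ := norm_pos_iff.mpr hv
      unfold nzd
      rw [norm_smul, smul_smul, Real.norm_eq_abs, abs_of_pos hc]
      rw [mul_inv, mul_assoc, mul_comm ‖v‖⁻¹ c, ← mul_assoc,
        inv_mul_cancel₀ hc.ne', one_mul]

/-- Motivation of angle-based clustering, Lemma 1.  For the asymmetric
dTBM mean tensor with surjective assignments and strictly positive degrees, two nodes
`i, j` on mode `k` have equal normalized core rows `Mat_k(S)_{z_k(i):}^s = Mat_k(S)_{z_k(j):}^s`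
iff they have equal normalized mean-tensor rows `Mat_k(X)_{i:}^s = Mat_k(X)_{j:}^s`. -/
theorem angle_based_clustering_motivation {K : ℕ} {p r : Fin K → ℕ}
    (S : ((k : Fin K) → Fin (r k)) → ℝ)
    (z : (k : Fin K) → Fin (p k) → Fin (r k))
    (θ : (k : Fin K) → Fin (p k) → ℝ)
    (hsurj : ∀ k, Function.Surjective (z k))
    (hθ : ∀ k i, 0 < θ k i)
    (X : ((k : Fin K) → Fin (p k)) → ℝ)
    (hX : ∀ i, X i = S (fun k => z k (i k)) * ∏ k, θ k (i k))
    (k : Fin K) (i j : Fin (p k)) :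
    nzd (matRowD S k (z k i)) = nzd (matRowD S k (z k j)) ↔
      nzd (matRowD X k i) = nzd (matRowD X k j) := by
  set w : ((m : {m : Fin K // m ≠ k}) → Fin (p m.1)) → ℝ :=
    fun j' => ∏ m : {m : Fin K // m ≠ k}, θ m.1 (j' m) with hw
  have hwpos : ∀ j', 0 < w j' :=
    fun j' => Finset.prod_pos (fun m _ => hθ m.1 (j' m))
  have key : ∀ (a : Fin (p k)) (j' : (m : {m : Fin K // m ≠ k}) → Fin (p m.1)),
      matRowD X k a j' =
        θ k a * (w j' * matRowD S k (z k a) (fun m => z m.1 (j' m))) := by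
    intro a j'
    simp only [matRowD, WithLp.ofLp_toLp, hX]
    have harg : (fun m : Fin K => z m (if h : m = k then (h.symm ▸ a : Fin (p m)) else j' ⟨m, h⟩))
        = (fun m : Fin K => if h : m = k then (h.symm ▸ (z k a) : Fin (r m))
            else z m (j' ⟨m, h⟩)) := by
      funext m
      by_cases h : m = k
      · subst h; simp
      · simp [h]
    rw [harg]
    have hprod : (∏ m : Fin K, θ m (if h : m = k then (h.symm ▸ a : Fin (p m)) else j' ⟨m, h⟩))
        = θ k a * w j' := by
      rw [← Finset.mul_prod_erase Finset.univ _ (Finset.mem_univ k)]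
      congr 1
      · simp
      · rw [hw]
        have hmem : ∀ m : Fin K, m ∈ Finset.univ.erase k ↔ m ≠ k := by
          intro m; simp [Finset.mem_erase]
        rw [Finset.prod_subtype (Finset.univ.erase k) hmem
            (fun m => θ m (if h : m = k then (h.symm ▸ a : Fin (p m)) else j' ⟨m, h⟩))]
        apply Finset.prod_congr rfl
        intro m _
        simp [m.2]
    rw [hprod]
    ring
  have hφ : ∀ b : (m : {m : Fin K // m ≠ k}) → Fin (r m.1),
      ∃ j' : (m : {m : Fin K // m ≠ k}) → Fin (p m.1),
        (fun m => z m.1 (j' m)) = b := by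
    intro b
    refine ⟨fun m => (hsurj m.1 (b m)).choose, ?_⟩
    funext m
    exact (hsurj m.1 (b m)).choose_spec
  rw [nzd_eq_iff, nzd_eq_iff]
  constructor
  · rintro ⟨c, hc, hS⟩
    refine ⟨c * θ k i / θ k j, div_pos (mul_pos hc (hθ k i)) (hθ k j), ?_⟩
    ext j'
    have hb := congrFun (congrArg WithLp.ofLp hS) (fun m => z m.1 (j' m))
    simp only [PiLp.smul_apply, smul_eq_mul] at hb ⊢
    rw [key, key, hb]
    have htj := (hθ k j).ne'
    field_simp
  · rintro ⟨c, hc, hXeq⟩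
    refine ⟨c * θ k j / θ k i, div_pos (mul_pos hc (hθ k j)) (hθ k i), ?_⟩
    ext b
    obtain ⟨j', hj'⟩ := hφ b
    have hx := congrFun (congrArg WithLp.ofLp hXeq) j'
    simp only [PiLp.smul_apply, smul_eq_mul] at hx ⊢
    rw [key, key, hj'] at hx
    have hwi := (hwpos j').ne'
    have hti := (hθ k i).ne'
    field_simp
    nlinarith [hx, hwpos j', hθ k i, hθ k j]
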